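/- Action of the Baxterised operators on the Bethe wave functions: for 1 ≤ i ≤ N−1 and a formal parameter v, with w treated as a constant, T_i(v)[ Δ_t(z_1,…,z_N) φ_i(w) ] = Δ_t(z_1,…,z_N) · ( φ_{i−1}(w) + φ_{i+1}(w) + ([1−v]/[v]) φ_i(w) ), and for every 0 ≤ j ≤ N with j ≠ i, T_i(v)[ Δ_t(z_1,…,z_N) φ_j(w) ] = ([1+v]/[v]) Δ_t(z_1,…,z_N) φ_j(w). -/

import Mathlib

open MvPolynomial Finset

noncomputable section

/-- Variable set: `m+1` parameters (index `0` is the indeterminate `t`, the others are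
extra invertible indeterminates such as `t^{u_k}`), `N` variables `z_0, …, z_{N-1}`,
and `r` auxiliary variables `w_0, …, w_{r-1}`. -/
abbrev Var (m N r : ℕ) : Type := (Fin (m + 1) ⊕ Fin N) ⊕ Fin r

/-- The polynomial ring over `ℚ` on those variables. -/
abbrev PR (m N r : ℕ) : Type := MvPolynomial (Var m N r) ℚ

/-- The field of rational functions over `ℚ` in the parameters, the `z`'s and the `w`'s. -/
abbrev FF (m N r : ℕ) : Type := FractionRing (PR m N r)

variable (m N r : ℕ)

/-- The parameter with index `k` (so `pa m N r 0` is `t`). -/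
def pa (k : Fin (m + 1)) : FF m N r :=
  algebraMap (PR m N r) (FF m N r) (X (Sum.inl (Sum.inl k)))

/-- The indeterminate `t`. -/
def tt' : FF m N r := pa m N r 0

/-- The variable `z_k` (`0`-indexed; junk value `0` if `k ≥ N`). -/
def zn (k : ℕ) : FF m N r :=
  if h : k < N then algebraMap (PR m N r) (FF m N r) (X (Sum.inl (Sum.inr ⟨k, h⟩))) else 0

/-- The variable `w_k` (`0`-indexed; junk value `0` if `k ≥ r`). -/
def wv (k : ℕ) : FF m N r :=
  if h : k < r then algebraMap (PR m N r) (FF m N r) (X (Sum.inr ⟨k, h⟩)) else 0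

/-- The field automorphism `s_i` exchanging `z_i` and `z_{i+1}` (identity if `i + 1 ≥ N`). -/
def sw (i : ℕ) : FF m N r ≃+* FF m N r :=
  if h : i + 1 < N then
    IsFractionRing.ringEquivOfRingEquiv
      ((renameEquiv ℚ (Equiv.swap ((Sum.inl (Sum.inr (⟨i, Nat.lt_of_succ_lt h⟩ : Fin N))) : Var m N r)
          (Sum.inl (Sum.inr (⟨i + 1, h⟩ : Fin N))))).toRingEquiv)
  else RingEquiv.refl _

/-- The Hecke algebra generator `T_i` in the polynomial representation (`0`-indexed:
`T_i f = ((t z_i - t⁻¹ z_{i+1})/(z_i - z_{i+1})) (f - s_i f) - t⁻¹ f`). -/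
def TT (i : ℕ) (f : FF m N r) : FF m N r :=
  (tt' m N r * zn m N r i - (tt' m N r)⁻¹ * zn m N r (i + 1)) / (zn m N r i - zn m N r (i + 1)) *
      (f - sw m N r i f) - (tt' m N r)⁻¹ * f

/-- The `t`-number `[u] = (t^u - t^{-u})/(t - t⁻¹)`, where `a` stands for `t^u`. -/
def tnum (a : FF m N r) : FF m N r := (a - a⁻¹) / (tt' m N r - (tt' m N r)⁻¹)

/-- The Baxterised operator `T_i(u) = T_i + (t^{-u}/[u]) id`, where `a` stands for `t^u`. -/
def TB (i : ℕ) (a : FF m N r) (f : FF m N r) : FF m N r :=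
  TT m N r i f + a⁻¹ / tnum m N r a * f

/-- The `t`-Vandermonde `Δ_t(z_a, …, z_{b-1}) = ∏_{a ≤ i < j < b} (t z_i - t⁻¹ z_j)`. -/
def Delt (a b : ℕ) : FF m N r :=
  ∏ j ∈ Finset.Ico a b, ∏ i ∈ Finset.Ico a j,
    (tt' m N r * zn m N r i - (tt' m N r)⁻¹ * zn m N r j)

/-- The Bethe wave function `φ_i(w) = ∏_{k<i} (w - z_k)⁻¹ ∏_{i ≤ k < N} (t w - t⁻¹ z_k)⁻¹`. -/
def phiF (i : ℕ) (w : FF m N r) : FF m N r :=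
  (∏ k ∈ Finset.range i, (w - zn m N r k))⁻¹ *
    (∏ k ∈ Finset.Ico i N, (tt' m N r * w - (tt' m N r)⁻¹ * zn m N r k))⁻¹

/-- Substitution `w_k := a`, computed on the reduced numerator and denominator. -/
def subW (k : ℕ) (a : FF m N r) (F : FF m N r) : FF m N r :=
  if h : k < r then
    aeval (fun v : Var m N r =>
        if v = Sum.inr (⟨k, h⟩ : Fin r) then a else algebraMap (PR m N r) (FF m N r) (X v))
      (IsFractionRing.num (PR m N r) F) /
    aeval (fun v : Var m N r =>
        if v = Sum.inr (⟨k, h⟩ : Fin r) then a else algebraMap (PR m N r) (FF m N r) (X v))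
      ((IsFractionRing.den (PR m N r) F) : PR m N r)
  else F

/-- The residue in `w_k` at `a` of a function with at most a simple pole there:
`((w_k - a) F)|_{w_k = a}`. -/
def resW (k : ℕ) (a : FF m N r) (F : FF m N r) : FF m N r :=
  subW m N r k a ((wv m N r k - a) * F)

/-- The contour integral `∮ F dw_k/(2πi)`: the sum of the residues at `z_0, …, z_{N-1}`. -/
def cint (k : ℕ) (F : FF m N r) : FF m N r :=
  ∑ j ∈ Finset.range N, resW m N r k (zn m N r j) F

/-- The iterated contour integral `∮⋯∮ F dw_0 ⋯ dw_{r-1}`,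
evaluated one variable at a time (`w_0` first). -/
def iInt (F : FF m N r) : FF m N r :=
  (List.range r).foldl (fun G k => cint m N r k G) F

/-- The string of Baxterised operators
`rowOps e c tv = T_{e+c-1}(v+1) ∘ T_{e+c-2}(v+2) ∘ ⋯ ∘ T_e(v+c)` (with `tv = t^v`). -/
def rowOps (e : ℕ) : ℕ → FF m N r → FF m N r → FF m N r
  | 0, _, f => f
  | c + 1, tv, f => TB m N r (e + c) (tv * tt' m N r) (rowOps e c (tv * tt' m N r) f)

/-- Application of the operators of the `i`-th row (from the top) of a Young diagram,
boxes `(i,1), …, (i,c)`, the box `(i,j)` contributing `T_{n+j-i}(…)` (`1`-indexed, so the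
Baxterised operator with `0`-indexed label `n+j-i-1`), the box `(i,1)` acting first;
`lab i j` stands for `t` raised to the spectral parameter of box `(i,j)`. -/
def rowApply (n : ℕ) (lab : ℕ → ℕ → FF m N r) (i : ℕ) : ℕ → FF m N r → FF m N r
  | 0, f => f
  | j + 1, f => TB m N r (n + (j + 1) - i - 1) (lab i (j + 1)) (rowApply n lab i j f)

/-- Application of all box operators of the Young diagram of `lam` (row `i` from the top
having `lam (n-i)` boxes), the rows being applied from top to bottom. This realises the
product `∏_{(i,j) ∈ λ} T_{n+j-i}(…)` where the operator of box `(i,j)` acts before those of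
boxes `(i+1,j)` and `(i,j+1)`. -/
def boxApply (n : ℕ) (lam : ℕ → ℕ) (lab : ℕ → ℕ → FF m N r) : ℕ → FF m N r → FF m N r
  | 0, f => f
  | i + 1, f => rowApply m N r n lab (i + 1) (lam (n - (i + 1))) (boxApply n lam lab i f)

/-- `ΔΔ = Δ_t(z_1,…,z_n) Δ_t(z_{n+1},…,z_{2n})` (here `N = 2n`). -/
def DDl (n : ℕ) : FF m N r := Delt m N r 0 n * Delt m N r n (2 * n)

/-- The deformed specialised Macdonald polynomial `M_λ(u_1, …, u_{n-1})`:
the box `(i,j)` of `λ` contributes `T_{n+j-i}(u_{n-i} + n - i - j + 1)`;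
`tu k` stands for `t^{u_k}`. -/
def Mac (n : ℕ) (lam : ℕ → ℕ) (tu : ℕ → FF m N r) : FF m N r :=
  boxApply m N r n lam (fun i j => tu (n - i) * tt' m N r ^ (n - i - j + 1)) (n - 1)
    (DDl m N r n)

/-- The Kazhdan-Lusztig labels: `v_{ij} = max (v_{i+1,j}, v_{i,j+1}) + 1` for a box of `λ`,
and `0` outside of `λ` (computed with fuel). -/
def klv (n : ℕ) (lam : ℕ → ℕ) : ℕ → ℕ → ℕ → ℕ
  | 0, _, _ => 0
  | fuel + 1, i, j =>
      if 1 ≤ i ∧ i ≤ n - 1 ∧ 1 ≤ j ∧ j ≤ lam (n - i) then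
        max (klv n lam fuel (i + 1) j) (klv n lam fuel i (j + 1)) + 1
      else 0

/-- The Kazhdan-Lusztig label of box `(i,j)`. -/
def klLabel (n : ℕ) (lam : ℕ → ℕ) (i j : ℕ) : ℕ := klv n lam (2 * n) i j

/-- The Kazhdan-Lusztig element `KL_λ = (∏_{(i,j) ∈ λ} T_{n+j-i}(v_{ij})) ΔΔ`. -/
def KL (n : ℕ) (lam : ℕ → ℕ) : FF m N r :=
  boxApply m N r n lam (fun i j => tt' m N r ^ klLabel n lam i j) (n - 1) (DDl m N r n)

/-- Evaluation `z_1 = ⋯ = z_N = 1`, computed on the reduced numerator and denominator. -/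
def evalZ (F : FF m N r) : FF m N r :=
  aeval (fun v : Var m N r =>
      match v with
      | Sum.inl (Sum.inr _) => 1
      | v => algebraMap (PR m N r) (FF m N r) (X v))
    (IsFractionRing.num (PR m N r) F) /
  aeval (fun v : Var m N r =>
      match v with
      | Sum.inl (Sum.inr _) => 1
      | v => algebraMap (PR m N r) (FF m N r) (X v))
    ((IsFractionRing.den (PR m N r) F) : PR m N r)

variable {R : Type*} [CommRing R]

/-- The polynomial `∏_{k=0}^{n-1} (1 + y_k x_{k+1}) ∏_{1 ≤ i < j ≤ n} (x_j - x_i)(1 + x_i x_j + τ x_j)`. -/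
def Apoly (n : ℕ) (τ : R) (y : ℕ → R) : MvPolynomial (Fin n) R :=
  (∏ k : Fin n, (1 + MvPolynomial.C (y (k : ℕ)) * MvPolynomial.X k)) *
    ∏ p ∈ Finset.univ.filter (fun p : Fin n × Fin n => p.1 < p.2),
      (MvPolynomial.X p.2 - MvPolynomial.X p.1) *
        (1 + MvPolynomial.X p.1 * MvPolynomial.X p.2 + MvPolynomial.C τ * MvPolynomial.X p.2)

/-- The constant term
`A_{a_1,…,a_{n-1}}(τ, y_1, …, y_{n-1}) = CT(∏ (1 + y_k x_{k+1}) x_{k+1}^{-a_k+1} ∏_{i<j} (x_j-x_i)(1+x_i x_j+τ x_j))`,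
extracted as the coefficient of `∏ x_{k+1}^{a_k - 1}`. -/
def Act (n : ℕ) (τ : R) (y : ℕ → R) (a : ℕ → ℕ) : R :=
  MvPolynomial.coeff (Finsupp.equivFunOnFinite.symm fun k : Fin n => a (k : ℕ) - 1)
    (Apoly n τ y)

/-- The TSSCPP constant term
`N(t_0,…,t_{n-1}) = CT(∏_{i<j} (x_j-x_i)(1+t_i x_j)/(1-x_i x_j) ∏_i (1+t_0 x_i) x_i^{-2i+2}/(1-x_i²))`. -/
def Nct (n : ℕ) (tv : ℕ → R) : R :=
  MvPowerSeries.coeff (R := R) (Finsupp.equivFunOnFinite.symm fun k : Fin n => 2 * (k : ℕ))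
    ((∏ p ∈ Finset.univ.filter (fun p : Fin n × Fin n => p.1 < p.2),
        ((MvPowerSeries.X p.2 - MvPowerSeries.X p.1) *
          (1 + MvPowerSeries.C (σ := Fin n) (R := R) (tv ((p.1 : ℕ) + 1)) * MvPowerSeries.X p.2) *
          MvPowerSeries.invOfUnit (1 - MvPowerSeries.X p.1 * MvPowerSeries.X p.2) 1)) *
      ∏ k : Fin n,
        ((1 + MvPowerSeries.C (σ := Fin n) (R := R) (tv 0) * MvPowerSeries.X k) *
          MvPowerSeries.invOfUnit (1 - MvPowerSeries.X k ^ 2) 1))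

/-!
Write `g = t z_i - t⁻¹ z_{i+1}` and `g' = t z_{i+1} - t⁻¹ z_i`. Pairing the factors of `Δ_t`
along `s_i` shows `s_i Δ_t · g = g' · Δ_t`, hence
`T_i (Δ_t F) = Δ_t ((g F - g' s_i F) / (z_i - z_{i+1}) - t⁻¹ F)`.
If `s_i F = F` (as for `φ_j`, `j ≠ i`) this is `t Δ_t F`, and `t + t^{-v}/[v] = [1+v]/[v]`.
For `F = φ_i` use the ladder relation `φ_j(w) (w - z_j) = φ_{j-1}(w) (t w - t⁻¹ z_j)`: it expresses
`φ_i`, `s_i φ_i` and `φ_{i+1}` through `φ_{i-1}`, and what remains is a polynomial identity in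
`t, w, z_i, z_{i+1}`; finally `t^{-v}/[v] - t⁻¹ = [1-v]/[v]`.
-/

open Equiv

section Products

variable {α β : Type*} [DecidableEq α] [CommMonoid β]

theorem Finset.prod_comp_swap {s : Finset α} {a b : α} (h : a ∈ s ↔ b ∈ s) (f : α → β) :
    ∏ x ∈ s, f (swap a b x) = ∏ x ∈ s, f x := by
  by_cases ha : a ∈ s
  · refine (swap a b).prod_comp s f fun x hx => ?_
    obtain ⟨-, rfl | rfl⟩ := swap_apply_ne_self_iff.mp hx
    exacts [ha, h.mp ha]
  · refine prod_congr rfl fun x hx => ?_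
    rw [swap_apply_of_ne_of_ne (ne_of_mem_of_not_mem hx ha)
      (ne_of_mem_of_not_mem hx (h.not.mp ha))]

theorem Finset.prod_lt_pairs_comp_swap {n a : ℕ} (h : a + 1 < n) (f : ℕ → ℕ → β) :
    (∏ j ∈ Ico 0 n, ∏ k ∈ Ico 0 j, f (swap a (a + 1) k) (swap a (a + 1) j)) * f a (a + 1) =
      f (a + 1) a * ∏ j ∈ Ico 0 n, ∏ k ∈ Ico 0 j, f k j := by
  set P := (range n ×ˢ range n).filter fun p => p.2 < p.1
  have hP (g : ℕ → ℕ → β) : ∏ j ∈ Ico 0 n, ∏ k ∈ Ico 0 j, g k j = ∏ p ∈ P, g p.2 p.1 := by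
    refine (prod_finset_product' P _ _ fun p => ?_).symm
    simp only [P, mem_filter, mem_product, mem_range, mem_Ico]
    omega
  have hmem : (a + 1, a) ∈ P := by simp only [P, mem_filter, mem_product, mem_range]; omega
  have hswap : ∏ p ∈ P.erase (a + 1, a), f (swap a (a + 1) p.2) (swap a (a + 1) p.1) =
      ∏ p ∈ P.erase (a + 1, a), f p.2 p.1 := by
    refine prod_equiv (prodCongr (swap a (a + 1)) (swap a (a + 1))) (fun p => ?_) fun _ _ => rfl
    simp only [P, mem_erase, mem_filter, mem_product, mem_range, prodCongr_apply, Prod.map,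
      ne_eq, Prod.ext_iff, swap_apply_def]
    split_ifs <;> omega
  rw [hP, hP, ← mul_prod_erase P _ hmem, ← mul_prod_erase P _ hmem, hswap, swap_apply_left,
    swap_apply_right]
  dsimp only
  ac_rfl

end Products

theorem exchange_of_ladder {K : Type*} [Field K] {t w x y φ₀ φ₁ ψ₁ φ₂ : K} (ht : t ≠ 0)
    (hxy : x - y ≠ 0) (hx : w - x ≠ 0) (hy : w - y ≠ 0)
    (h₁ : φ₁ * (w - x) = φ₀ * (t * w - t⁻¹ * x))
    (h₂ : φ₂ * (w - y) = φ₁ * (t * w - t⁻¹ * y))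
    (h₁' : ψ₁ * (w - y) = φ₀ * (t * w - t⁻¹ * y)) :
    ((t * x - t⁻¹ * y) * φ₁ - (t * y - t⁻¹ * x) * ψ₁) / (x - y) = φ₀ + φ₂ := by
  rw [div_eq_iff hxy]
  refine mul_right_cancel₀ (mul_ne_zero hx hy) ?_
  linear_combination ((t * x - t⁻¹ * y) * (w - y) - (x - y) * (t * w - t⁻¹ * y)) * h₁ -
    (t * y - t⁻¹ * x) * (w - x) * h₁' - (x - y) * (w - x) * h₂ +
    φ₀ * (x - y) * (w - x) * (w - y) * mul_inv_cancel₀ ht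

variable {m N r : ℕ}

theorem algebraMap_X_sub_X_ne_zero {u v : Var m N r} (h : u ≠ v) :
    algebraMap (PR m N r) (FF m N r) (X u) - algebraMap (PR m N r) (FF m N r) (X v) ≠ 0 := by
  rw [← map_sub, map_ne_zero_iff _ (IsFractionRing.injective _ _), sub_ne_zero]
  exact (X_injective (R := ℚ)).ne h

theorem pa_ne_zero (k : Fin (m + 1)) : pa m N r k ≠ 0 := by
  rw [pa, map_ne_zero_iff _ (IsFractionRing.injective _ _)]
  exact X_ne_zero _

theorem tt'_ne_zero : tt' m N r ≠ 0 := pa_ne_zero 0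

theorem pa_sub_inv_ne_zero (k : Fin (m + 1)) : pa m N r k - (pa m N r k)⁻¹ ≠ 0 := by
  intro h
  have hsq : pa m N r k * pa m N r k = 1 := by
    rw [sub_eq_zero] at h
    nth_rw 2 [h]; exact mul_inv_cancel₀ (pa_ne_zero k)
  rw [pa, ← map_mul] at hsq
  have := congrArg (eval fun _ => (2 : ℚ))
    (IsFractionRing.injective (PR m N r) (FF m N r) (hsq.trans (map_one _).symm))
  norm_num at this

theorem tt'_mul_sub_inv_mul_ne_zero {u v : Var m N r} (huv : u ≠ v)
    (hv : v ≠ .inl (.inl 0)) :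
    tt' m N r * algebraMap (PR m N r) (FF m N r) (X u) -
      (tt' m N r)⁻¹ * algebraMap (PR m N r) (FF m N r) (X v) ≠ 0 := by
  have ht : tt' m N r ≠ 0 := tt'_ne_zero
  have hpoly : tt' m N r * (tt' m N r * algebraMap (PR m N r) (FF m N r) (X u) -
      (tt' m N r)⁻¹ * algebraMap (PR m N r) (FF m N r) (X v)) =
      algebraMap (PR m N r) (FF m N r) (X (.inl (.inl 0)) * X (.inl (.inl 0)) * X u - X v) := by
    rw [map_sub, map_mul, map_mul, tt', pa]
    field_simp
  refine fun h => (map_ne_zero_iff _ (IsFractionRing.injective (PR m N r) (FF m N r))).mpr ?_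
    (by rw [← hpoly, h, mul_zero])
  intro h0
  have := congrArg (eval fun x => if x = v then 0 else 1) h0
  simp [huv, hv.symm] at this

theorem zn_sub_zn_ne_zero {i j : ℕ} (hi : i < N) (hj : j < N) (hij : i ≠ j) :
    zn m N r i - zn m N r j ≠ 0 := by
  rw [zn, dif_pos hi, zn, dif_pos hj]
  exact algebraMap_X_sub_X_ne_zero (by simp [hij])

theorem wv_sub_zn_ne_zero {k j : ℕ} (hk : k < r) (hj : j < N) :
    wv m N r k - zn m N r j ≠ 0 := by
  rw [wv, dif_pos hk, zn, dif_pos hj]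
  exact algebraMap_X_sub_X_ne_zero (by simp)

theorem tt'_mul_wv_sub_ne_zero {k j : ℕ} (hk : k < r) (hj : j < N) :
    tt' m N r * wv m N r k - (tt' m N r)⁻¹ * zn m N r j ≠ 0 := by
  rw [wv, dif_pos hk, zn, dif_pos hj]
  exact tt'_mul_sub_inv_mul_ne_zero (by simp) (by simp)

theorem tt'_sub_inv_ne_zero : tt' m N r - (tt' m N r)⁻¹ ≠ 0 := pa_sub_inv_ne_zero 0

theorem tnum_ne_zero {a : FF m N r} (ha : a - a⁻¹ ≠ 0) : tnum m N r a ≠ 0 :=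
  div_ne_zero ha tt'_sub_inv_ne_zero

theorem zn_val (k : Fin N) :
    zn m N r k = algebraMap (PR m N r) (FF m N r) (X (.inl (.inr k))) :=
  dif_pos k.2

theorem sw_algebraMap {i : ℕ} (h : i + 1 < N) (p : PR m N r) :
    sw m N r i (algebraMap (PR m N r) (FF m N r) p) =
      algebraMap (PR m N r) (FF m N r)
        (rename (swap (.inl (.inr ⟨i, by omega⟩)) (.inl (.inr ⟨i + 1, h⟩))) p) := by
  rw [sw, dif_pos h]
  exact IsFractionRing.ringEquivOfRingEquiv_algebraMap _ p

theorem sw_zn {i : ℕ} (h : i + 1 < N) (k : ℕ) :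
    sw m N r i (zn m N r k) = zn m N r (swap i (i + 1) k) := by
  by_cases hk : k < N
  · have hinj : Function.Injective fun k : Fin N => (.inl (.inr k) : Var m N r) :=
      Sum.inl_injective.comp Sum.inr_injective
    lift k to Fin N using hk
    rw [zn_val, sw_algebraMap h, rename_X, hinj.swap_apply,
      show swap i (i + 1) (k : ℕ) = (swap (⟨i, by omega⟩ : Fin N) ⟨i + 1, h⟩ k : ℕ) from
        Fin.val_injective.swap_apply (⟨i, by omega⟩ : Fin N) ⟨i + 1, h⟩ k, zn_val]
  · rw [swap_apply_of_ne_of_ne (by omega) (by omega), zn, dif_neg hk, map_zero]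

theorem sw_algebraMap_X_of_ne {i : ℕ} {u : Var m N r} (hu : ∀ k : Fin N, u ≠ .inl (.inr k)) :
    sw m N r i (algebraMap (PR m N r) (FF m N r) (X u)) =
      algebraMap (PR m N r) (FF m N r) (X u) := by
  by_cases h : i + 1 < N
  · rw [sw_algebraMap h, rename_X, swap_apply_of_ne_of_ne (hu _) (hu _)]
  · rw [sw, dif_neg h]
    rfl

theorem sw_tt' (i : ℕ) : sw m N r i (tt' m N r) = tt' m N r :=
  sw_algebraMap_X_of_ne (by simp)

theorem sw_wv (i k : ℕ) : sw m N r i (wv m N r k) = wv m N r k := by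
  unfold wv
  split_ifs
  exacts [sw_algebraMap_X_of_ne (by simp), map_zero _]

theorem sw_Delt_mul {i : ℕ} (h : i + 1 < N) :
    sw m N r i (Delt m N r 0 N) * (tt' m N r * zn m N r i - (tt' m N r)⁻¹ * zn m N r (i + 1)) =
      (tt' m N r * zn m N r (i + 1) - (tt' m N r)⁻¹ * zn m N r i) * Delt m N r 0 N := by
  simp only [Delt, map_prod, map_sub, map_mul, map_inv₀, sw_tt', sw_zn h]
  exact prod_lt_pairs_comp_swap h fun a b => tt' m N r * zn m N r a - (tt' m N r)⁻¹ * zn m N r b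

theorem sw_phiF_of_ne {i j : ℕ} (h : i + 1 < N) {w : FF m N r} (hw : sw m N r i w = w)
    (hj : j ≠ i + 1) : sw m N r i (phiF m N r j w) = phiF m N r j w := by
  have hlo : i ∈ range j ↔ i + 1 ∈ range j := by simp only [mem_range]; omega
  have hhi : i ∈ Ico j N ↔ i + 1 ∈ Ico j N := by simp only [mem_Ico]; omega
  simp only [phiF, map_mul, map_inv₀, map_prod, map_sub, map_mul, sw_tt', hw, sw_zn h]
  rw [prod_comp_swap hlo fun k => w - zn m N r k,
    prod_comp_swap hhi fun k => tt' m N r * w - (tt' m N r)⁻¹ * zn m N r k]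

theorem phiF_succ_mul {j : ℕ} (hj : j < N) {w : FF m N r} (ha : w - zn m N r j ≠ 0)
    (hb : tt' m N r * w - (tt' m N r)⁻¹ * zn m N r j ≠ 0) :
    phiF m N r (j + 1) w * (w - zn m N r j) =
      phiF m N r j w * (tt' m N r * w - (tt' m N r)⁻¹ * zn m N r j) := by
  rw [phiF, phiF, prod_range_succ, prod_eq_prod_Ico_succ_bot hj, mul_inv, mul_inv]
  linear_combination (∏ k ∈ range j, (w - zn m N r k))⁻¹ *
    (∏ k ∈ Ico (j + 1) N, (tt' m N r * w - (tt' m N r)⁻¹ * zn m N r k))⁻¹ *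
      (inv_mul_cancel₀ ha - inv_mul_cancel₀ hb)

theorem TT_Delt_mul {i : ℕ} (h : i + 1 < N) (F : FF m N r) :
    TT m N r i (Delt m N r 0 N * F) = Delt m N r 0 N *
      (((tt' m N r * zn m N r i - (tt' m N r)⁻¹ * zn m N r (i + 1)) * F -
          (tt' m N r * zn m N r (i + 1) - (tt' m N r)⁻¹ * zn m N r i) * sw m N r i F) /
        (zn m N r i - zn m N r (i + 1)) - (tt' m N r)⁻¹ * F) := by
  rw [TT, map_mul]
  linear_combination (-sw m N r i F / (zn m N r i - zn m N r (i + 1))) * sw_Delt_mul h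

theorem TT_Delt_mul_of_sw_eq {i : ℕ} (h : i + 1 < N) {F : FF m N r} (hF : sw m N r i F = F) :
    TT m N r i (Delt m N r 0 N * F) = tt' m N r * (Delt m N r 0 N * F) := by
  have ht : tt' m N r ≠ 0 := tt'_ne_zero
  have hxy : zn m N r i - zn m N r (i + 1) ≠ 0 := zn_sub_zn_ne_zero (by omega) h (by omega)
  rw [TT_Delt_mul h, hF]
  field_simp
  ring

theorem TT_Delt_mul_phiF_succ {i k : ℕ} (h : i + 1 < N) (hk : k < r) :
    TT m N r i (Delt m N r 0 N * phiF m N r (i + 1) (wv m N r k)) =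
      Delt m N r 0 N * (phiF m N r i (wv m N r k) + phiF m N r (i + 2) (wv m N r k) -
        (tt' m N r)⁻¹ * phiF m N r (i + 1) (wv m N r k)) := by
  have ladder {j : ℕ} (hj : j < N) :=
    phiF_succ_mul (w := wv m N r k) hj (wv_sub_zn_ne_zero hk hj) (tt'_mul_wv_sub_ne_zero hk hj)
  have ladder_sw := congrArg (sw m N r i) (ladder (j := i) (by omega))
  simp only [map_mul, map_sub, map_inv₀, sw_phiF_of_ne (j := i) h (sw_wv i k) (by omega), sw_wv,
    sw_tt', sw_zn h, swap_apply_left] at ladder_sw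
  rw [TT_Delt_mul h, exchange_of_ladder tt'_ne_zero (zn_sub_zn_ne_zero (by omega) h (by omega))
    (wv_sub_zn_ne_zero hk (by omega)) (wv_sub_zn_ne_zero hk h) (ladder (by omega)) (ladder h)
    ladder_sw]

theorem tt'_add_inv_div_tnum {a : FF m N r} (ha : a - a⁻¹ ≠ 0) :
    tt' m N r + a⁻¹ / tnum m N r a = tnum m N r (tt' m N r * a) / tnum m N r a := by
  rw [eq_div_iff (tnum_ne_zero ha), add_mul, div_mul_cancel₀ _ (tnum_ne_zero ha), tnum, tnum]
  linear_combination (-a⁻¹) * mul_inv_cancel₀ (tt'_sub_inv_ne_zero (m := m) (N := N) (r := r))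

theorem inv_div_tnum_sub_tt'_inv {a : FF m N r} (ha : a - a⁻¹ ≠ 0) :
    a⁻¹ / tnum m N r a - (tt' m N r)⁻¹ = tnum m N r (tt' m N r * a⁻¹) / tnum m N r a := by
  rw [eq_div_iff (tnum_ne_zero ha), sub_mul, div_mul_cancel₀ _ (tnum_ne_zero ha), tnum, tnum,
    mul_inv, inv_inv]
  linear_combination (-a⁻¹) * mul_inv_cancel₀ (tt'_sub_inv_ne_zero (m := m) (N := N) (r := r))

theorem TB_Delt_mul_of_sw_eq {i : ℕ} (h : i + 1 < N) {F : FF m N r} (hF : sw m N r i F = F)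
    {a : FF m N r} (ha : a - a⁻¹ ≠ 0) :
    TB m N r i a (Delt m N r 0 N * F) =
      tnum m N r (tt' m N r * a) / tnum m N r a * (Delt m N r 0 N * F) := by
  rw [TB, TT_Delt_mul_of_sw_eq h hF, ← tt'_add_inv_div_tnum ha, add_mul]

theorem TB_Delt_mul_phiF_succ {i k : ℕ} (h : i + 1 < N) (hk : k < r)
    {a : FF m N r} (ha : a - a⁻¹ ≠ 0) :
    TB m N r i a (Delt m N r 0 N * phiF m N r (i + 1) (wv m N r k)) =
      Delt m N r 0 N * (phiF m N r i (wv m N r k) + phiF m N r (i + 2) (wv m N r k) +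
        tnum m N r (tt' m N r * a⁻¹) / tnum m N r a * phiF m N r (i + 1) (wv m N r k)) := by
  rw [TB, TT_Delt_mul_phiF_succ h hk, ← inv_div_tnum_sub_tt'_inv ha]
  ring

/-- Indices are `0`-based: the paper's `T_i` is `TB (i - 1)`, while `φ_j` keeps its index;
`pa 1 N 1 1` is `t^v` and `wv 1 N 1 0` is `w`. -/
theorem baxterised_on_phi_general (N : ℕ) (i : ℕ) (hi : i + 2 ≤ N) :
    (TB 1 N 1 i (pa 1 N 1 1) (Delt 1 N 1 0 N * phiF 1 N 1 (i + 1) (wv 1 N 1 0)) =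
        Delt 1 N 1 0 N *
          (phiF 1 N 1 i (wv 1 N 1 0) + phiF 1 N 1 (i + 2) (wv 1 N 1 0) +
            tnum 1 N 1 (tt' 1 N 1 * (pa 1 N 1 1)⁻¹) / tnum 1 N 1 (pa 1 N 1 1) *
              phiF 1 N 1 (i + 1) (wv 1 N 1 0))) ∧
      ∀ j : ℕ, j ≤ N → j ≠ i + 1 →
        TB 1 N 1 i (pa 1 N 1 1) (Delt 1 N 1 0 N * phiF 1 N 1 j (wv 1 N 1 0)) =
          tnum 1 N 1 (tt' 1 N 1 * pa 1 N 1 1) / tnum 1 N 1 (pa 1 N 1 1) *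
            (Delt 1 N 1 0 N * phiF 1 N 1 j (wv 1 N 1 0)) := by
  have h : i + 1 < N := by omega
  exact ⟨TB_Delt_mul_phiF_succ h zero_lt_one (pa_sub_inv_ne_zero 1),
    fun j _ hj => TB_Delt_mul_of_sw_eq h (sw_phiF_of_ne h (sw_wv i 0) hj) (pa_sub_inv_ne_zero 1)⟩

/-- action of the Baxterised operators on the Bethe wave functions.
Here `pa 1 N 1 1` is the formal parameter `t^v`, `w = wv 1 N 1 0` is a constant, the
`z`'s and operators are `0`-indexed (the paper's `T_i`, `1 ≤ i ≤ N-1`, is `TB (i-1)`,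
and `φ` keeps its indexing `0 ≤ i ≤ N` since it counts factors).  For `1 ≤ i ≤ N-1`:
`T_i(v)[Δ_t(z_1,…,z_N) φ_i(w)] = Δ_t(z_1,…,z_N)(φ_{i-1}(w) + φ_{i+1}(w) + ([1-v]/[v]) φ_i(w))`,
and for `0 ≤ j ≤ N`, `j ≠ i`:
`T_i(v)[Δ_t(z_1,…,z_N) φ_j(w)] = ([1+v]/[v]) Δ_t(z_1,…,z_N) φ_j(w)`;
`[1-v] = tnum (t · (t^v)⁻¹)`, `[v] = tnum (t^v)`, `[1+v] = tnum (t · t^v)`. -/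
theorem baxterised_on_phi (N : ℕ) (hN : 2 ≤ N) (i : ℕ) (hi : i + 2 ≤ N) :
    (TB 1 N 1 i (pa 1 N 1 1) (Delt 1 N 1 0 N * phiF 1 N 1 (i + 1) (wv 1 N 1 0)) =
        Delt 1 N 1 0 N *
          (phiF 1 N 1 i (wv 1 N 1 0) + phiF 1 N 1 (i + 2) (wv 1 N 1 0) +
            tnum 1 N 1 (tt' 1 N 1 * (pa 1 N 1 1)⁻¹) / tnum 1 N 1 (pa 1 N 1 1) *
              phiF 1 N 1 (i + 1) (wv 1 N 1 0))) ∧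
      ∀ j : ℕ, j ≤ N → j ≠ i + 1 →
        TB 1 N 1 i (pa 1 N 1 1) (Delt 1 N 1 0 N * phiF 1 N 1 j (wv 1 N 1 0)) =
          tnum 1 N 1 (tt' 1 N 1 * pa 1 N 1 1) / tnum 1 N 1 (pa 1 N 1 1) *
            (Delt 1 N 1 0 N * phiF 1 N 1 j (wv 1 N 1 0)) :=
  baxterised_on_phi_general N i hi
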